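/- Let (F_n)_{n≥0} be a filtration, (M_n)_{n≥1} an R^D-valued martingale difference sequence (M_n is F_n-measurable, E‖M_n‖_*² < ∞, E[M_n | F_{n−1}] = 0 a.s.), (X_n)_{n≥0} an adapted sequence with values in a compact set X ⊂ R^D, x ∈ X fixed, and γ_n > 0 with Σ_{k=0}^∞ γ_k = ∞ and Σ_{k=0}^∞ γ_k² E‖M_{k+1}‖_*² / ( Σ_{i=0}^k γ_i )² < ∞. Then S_n(x) / ( Σ_{k=0}^{n−1} γ_k ) → 0 almost surely as n → ∞, where S_n(x) = Σ_{k=0}^{n−1} γ_k ⟨X_k − x, M_{k+1}⟩. -/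

import Mathlib

open scoped BigOperators

noncomputable section

/-- The standard duality pairing on `ℝ^D`. -/
def stdPair {D : ℕ} (x y : Fin D → ℝ) : ℝ := ∑ j, x j * y j

/-- A norm on `ℝ^D`, given as explicit data. -/
structure NormOn (D : ℕ) where
  toFun : (Fin D → ℝ) → ℝ
  add_le' : ∀ x y, toFun (x + y) ≤ toFun x + toFun y
  smul' : ∀ (c : ℝ) (x : Fin D → ℝ), toFun (c • x) = |c| * toFun x
  eq_zero' : ∀ x, toFun x = 0 → x = 0

instance {D : ℕ} : CoeFun (NormOn D) (fun _ => (Fin D → ℝ) → ℝ) := ⟨NormOn.toFun⟩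

/-- The dual norm `‖y‖_* = sup_{‖x‖ ≤ 1} ⟨x, y⟩` of a norm on `ℝ^D`. -/
def dualNorm {D : ℕ} (nrm : NormOn D) (y : Fin D → ℝ) : ℝ :=
  sSup ((fun x => stdPair x y) '' {x | nrm x ≤ 1})

/-! Write `a_k = Σ_{i ≤ k} γ_i` and `Z_k = ⟨X_k - x, M_{k+1}⟩`. Since `C` is compact,
`‖X_k - x‖ ≤ B`, so `|Z_k| ≤ B ‖M_{k+1}‖_*`; and since `X_k - x` is `F_k`-measurable, `Z_k` is a
square-integrable martingale difference. The martingale `Σ_k (γ_k / a_k) Z_k` has orthogonal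
increments, so its second moments are bounded by `B²` times the summable series of the hypothesis;
being bounded in `L²`, it converges almost surely. Kronecker's lemma then turns convergence of
`Σ_k γ_k Z_k / a_k` into `(Σ_{k<n} γ_k Z_k) / a_{n-1} → 0`. -/

open MeasureTheory Filter Topology

def stdPairL (D : ℕ) : (Fin D → ℝ) →L[ℝ] (Fin D → ℝ) →L[ℝ] ℝ :=
  (dotProductBilin ℝ ℝ).toContinuousBilinearMap

@[simp]
lemma stdPairL_apply {D : ℕ} (u y : Fin D → ℝ) : stdPairL D u y = stdPair u y := rfl

lemma stdPair_single_left {D : ℕ} (j : Fin D) (y : Fin D → ℝ) :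
    stdPair (Pi.single j 1) y = y j := by
  simp [stdPair, Pi.single_apply]

namespace NormOn

variable {D : ℕ} (nrm : NormOn D)

lemma map_zero : nrm 0 = 0 := by simpa using nrm.smul' 0 0

lemma map_neg_eq_map (v : Fin D → ℝ) : nrm (-v) = nrm v := by simpa using nrm.smul' (-1) v

lemma apply_nonneg (v : Fin D → ℝ) : 0 ≤ nrm v := by
  have h := nrm.add_le' v (-v)
  rw [add_neg_cancel, map_zero, map_neg_eq_map] at h
  linarith

/-- `ℝ^D` with `nrm` as its norm, so that the equivalence of all norms in finite dimension
applies to `nrm`. -/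
def Space (_ : NormOn D) : Type := Fin D → ℝ

instance : AddCommGroup nrm.Space := inferInstanceAs (AddCommGroup (Fin D → ℝ))

instance : Module ℝ nrm.Space := inferInstanceAs (Module ℝ (Fin D → ℝ))

instance : FiniteDimensional ℝ nrm.Space := inferInstanceAs (FiniteDimensional ℝ (Fin D → ℝ))

instance : Norm nrm.Space := ⟨nrm.toFun⟩

theorem normedSpaceCore : NormedSpace.Core ℝ nrm.Space where
  norm_nonneg := nrm.apply_nonneg
  norm_smul c v := by rw [Real.norm_eq_abs]; exact nrm.smul' c v
  norm_triangle := nrm.add_le'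
  norm_eq_zero_iff v := ⟨nrm.eq_zero' v, fun h => h ▸ nrm.map_zero⟩

instance : NormedAddCommGroup nrm.Space := .ofCore nrm.normedSpaceCore

instance : NormedSpace ℝ nrm.Space := .ofCore nrm.normedSpaceCore

def equivSpace : (Fin D → ℝ) ≃L[ℝ] nrm.Space :=
  LinearEquiv.toContinuousLinearEquiv
    { toFun := id, invFun := id, map_add' _ _ := rfl, map_smul' _ _ := rfl,
      left_inv _ := rfl, right_inv _ := rfl }

protected lemma continuous : Continuous nrm.toFun :=
  continuous_norm.comp nrm.equivSpace.continuous

lemma exists_le_mul_norm : ∃ K, 0 ≤ K ∧ ∀ v, nrm v ≤ K * ‖v‖ :=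
  ⟨_, norm_nonneg _, fun v => (nrm.equivSpace : (Fin D → ℝ) →L[ℝ] nrm.Space).le_opNorm v⟩

lemma exists_norm_le_mul : ∃ c, 0 ≤ c ∧ ∀ v, ‖v‖ ≤ c * nrm v :=
  ⟨_, norm_nonneg _, fun v =>
    (nrm.equivSpace.symm : nrm.Space →L[ℝ] (Fin D → ℝ)).le_opNorm (nrm.equivSpace v)⟩

lemma bddAbove_stdPair_unitBall (y : Fin D → ℝ) :
    BddAbove ((fun x => stdPair x y) '' {x | nrm x ≤ 1}) := by
  obtain ⟨c, hc0, hc⟩ := nrm.exists_norm_le_mul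
  refine ⟨‖stdPairL D‖ * c * ‖y‖, ?_⟩
  rintro _ ⟨u, hu, rfl⟩
  have hu' : ‖u‖ ≤ c := by simpa using (hc u).trans (mul_le_mul_of_nonneg_left hu hc0)
  calc stdPair u y ≤ ‖stdPairL D u y‖ := Real.le_norm_self _
    _ ≤ ‖stdPairL D‖ * ‖u‖ * ‖y‖ := (stdPairL D).le_opNorm₂ u y
    _ ≤ ‖stdPairL D‖ * c * ‖y‖ := by gcongr

lemma dualNorm_nonneg (y : Fin D → ℝ) : 0 ≤ dualNorm nrm y :=
  le_csSup_of_le (nrm.bddAbove_stdPair_unitBall y) ⟨0, by simp [nrm.map_zero], rfl⟩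
    (by simp [stdPair])

lemma stdPair_le_mul_dualNorm (u y : Fin D → ℝ) : stdPair u y ≤ nrm u * dualNorm nrm y := by
  rcases (nrm.apply_nonneg u).eq_or_lt with h | h
  · rw [nrm.eq_zero' u h.symm, nrm.map_zero]
    simp [stdPair]
  have hunit : nrm ((nrm u)⁻¹ • u) ≤ 1 := by
    rw [nrm.smul', abs_of_pos (inv_pos.mpr h), inv_mul_cancel₀ h.ne']
  have hle : stdPair ((nrm u)⁻¹ • u) y ≤ dualNorm nrm y :=
    le_csSup (nrm.bddAbove_stdPair_unitBall y) ⟨_, hunit, rfl⟩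
  rwa [← stdPairL_apply, map_smul, smul_apply, stdPairL_apply, smul_eq_mul,
    inv_mul_le_iff₀ h] at hle

lemma abs_stdPair_le_mul_dualNorm (u y : Fin D → ℝ) :
    |stdPair u y| ≤ nrm u * dualNorm nrm y := by
  refine abs_le.mpr ⟨?_, nrm.stdPair_le_mul_dualNorm u y⟩
  have h := nrm.stdPair_le_mul_dualNorm (-u) y
  rw [nrm.map_neg_eq_map, ← stdPairL_apply, _root_.map_neg, neg_apply, stdPairL_apply] at h
  linarith

lemma exists_norm_le_mul_dualNorm : ∃ K, 0 ≤ K ∧ ∀ y, ‖y‖ ≤ K * dualNorm nrm y := by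
  obtain ⟨K, hK, hle⟩ := nrm.exists_le_mul_norm
  refine ⟨K, hK, fun y => (pi_norm_le_iff_of_nonneg (mul_nonneg hK (nrm.dualNorm_nonneg y))).mpr
    fun j => ?_⟩
  have hj : nrm (Pi.single j 1) ≤ K := by simpa [Pi.norm_single] using hle (Pi.single j 1)
  calc ‖y j‖ = |stdPair (Pi.single j 1) y| := by rw [stdPair_single_left, Real.norm_eq_abs]
    _ ≤ nrm (Pi.single j 1) * dualNorm nrm y := nrm.abs_stdPair_le_mul_dualNorm _ y
    _ ≤ K * dualNorm nrm y := by gcongr; exact nrm.dualNorm_nonneg y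

end NormOn

section Kronecker

open Finset

theorem Filter.Tendsto.weighted_cesaro {γ s : ℕ → ℝ} {L : ℝ} (hs : Tendsto s atTop (𝓝 L))
    (hγ : 0 ≤ γ) (hdiv : Tendsto (fun n => ∑ k ∈ range n, γ k) atTop atTop) :
    Tendsto (fun n => (∑ k ∈ range n, γ k * s k) / ∑ k ∈ range n, γ k) atTop (𝓝 L) := by
  have hsL : (fun k => s k - L) =o[atTop] (fun _ => (1 : ℝ)) :=
    (Asymptotics.isLittleO_one_iff ℝ).2 (tendsto_sub_nhds_zero_iff.2 hs)
  have hdev : (fun n => ∑ k ∈ range n, γ k * (s k - L)) =o[atTop]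
      (fun n => ∑ k ∈ range n, γ k) := by
    refine Asymptotics.IsLittleO.sum_range ?_ hγ hdiv
    simpa using (Asymptotics.isBigO_refl γ atTop).mul_isLittleO hsL
  have hlim := hdev.tendsto_div_nhds_zero.add_const L
  rw [zero_add] at hlim
  refine hlim.congr' ?_
  filter_upwards [hdiv.eventually_gt_atTop 0] with n hn
  simp only [mul_sub, sum_sub_distrib, ← sum_mul]
  field_simp
  ring

theorem Filter.Tendsto.kronecker {γ x : ℕ → ℝ} {L : ℝ} (hγ : ∀ n, 0 < γ n)
    (hdiv : Tendsto (fun n => ∑ k ∈ range n, γ k) atTop atTop)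
    (hx : Tendsto (fun n => ∑ k ∈ range n, x k / ∑ i ∈ range (k + 1), γ i) atTop (𝓝 L)) :
    Tendsto (fun n => (∑ k ∈ range n, x k) / ∑ k ∈ range n, γ k) atTop (𝓝 0) := by
  set b : ℕ → ℝ := fun n => ∑ k ∈ range n, γ k
  set s : ℕ → ℝ := fun n => ∑ k ∈ range n, x k / b (k + 1)
  have hb : ∀ n, 0 < b (n + 1) := fun n => sum_pos (fun i _ => hγ i) nonempty_range_add_one
  have hparts : ∀ n, ∑ k ∈ range n, x k = b n * s n - ∑ k ∈ range n, γ k * s k := by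
    intro n
    induction n with
    | zero => simp [b, s]
    | succ n ih =>
      have hbs : b (n + 1) = b n + γ n := sum_range_succ γ n
      have hss : s (n + 1) = s n + x n / b (n + 1) := sum_range_succ _ n
      have hxn : b (n + 1) * (x n / b (n + 1)) = x n := mul_div_cancel₀ _ (hb n).ne'
      rw [sum_range_succ, sum_range_succ (fun k => γ k * s k), ih, hss, mul_add, hxn, hbs]
      ring
  have hlim := hx.sub (hx.weighted_cesaro (fun n => (hγ n).le) hdiv)
  rw [sub_self] at hlim
  refine hlim.congr' ?_
  filter_upwards [hdiv.eventually_gt_atTop 0] with n hn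
  change s n - _ / b n = (∑ k ∈ range n, x k) / b n
  rw [hparts n]
  field_simp

end Kronecker

section SquareIntegrableMartingale

variable {Ω : Type*} {m0 : MeasurableSpace Ω} {μ : Measure Ω}

lemma integral_mul_eq_zero_of_condExp_eq_zero {m : MeasurableSpace Ω} (hm : m ≤ m0)
    [SigmaFinite (μ.trim hm)] {g Y : Ω → ℝ} (hg : StronglyMeasurable[m] g)
    (hgY : Integrable (g * Y) μ) (hY : Integrable Y μ) (hmean : μ[Y | m] =ᵐ[μ] 0) :
    ∫ ω, g ω * Y ω ∂μ = 0 := by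
  calc ∫ ω, g ω * Y ω ∂μ = ∫ ω, (μ[g * Y | m]) ω ∂μ := (integral_condExp hm).symm
    _ = ∫ ω, (g * μ[Y | m]) ω ∂μ :=
        integral_congr_ae (condExp_mul_of_stronglyMeasurable_left hg hgY hY)
    _ = 0 := integral_eq_zero_of_ae (by filter_upwards [hmean] with ω hω; simp [hω])

lemma eLpNorm_one_le_of_memLp_two [IsFiniteMeasure μ] {f : Ω → ℝ} (hf : MemLp f 2 μ) :
    eLpNorm f 1 μ ≤ ENNReal.ofReal (μ.real Set.univ + ∫ ω, f ω ^ 2 ∂μ) := by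
  have hint := hf.integrable one_le_two
  rw [eLpNorm_one_eq_lintegral_enorm, ← ofReal_integral_norm_eq_lintegral_enorm hint]
  refine ENNReal.ofReal_le_ofReal ?_
  calc ∫ ω, ‖f ω‖ ∂μ ≤ ∫ ω, (1 + f ω ^ 2) ∂μ :=
        integral_mono hint.norm ((integrable_const 1).add hf.integrable_sq) fun ω => by
          rw [Real.norm_eq_abs]
          nlinarith [sq_abs (f ω), sq_nonneg (|f ω| - 1)]
    _ = μ.real Set.univ + ∫ ω, f ω ^ 2 ∂μ := by
        rw [integral_add (integrable_const 1) hf.integrable_sq, integral_const, smul_eq_mul,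
          mul_one]

variable [IsFiniteMeasure μ] {F : Filtration ℕ m0} {Y : ℕ → Ω → ℝ}

lemma stronglyAdapted_sum_range (hmeas : ∀ k, StronglyMeasurable[F (k + 1)] (Y k)) :
    StronglyAdapted F (fun n ω => ∑ k ∈ Finset.range n, Y k ω) := fun _ =>
  Finset.stronglyMeasurable_fun_sum _ fun k hk =>
    (hmeas k).mono (F.mono (Finset.mem_range.mp hk))

lemma martingale_sum_range (hmeas : ∀ k, StronglyMeasurable[F (k + 1)] (Y k))
    (hint : ∀ k, Integrable (Y k) μ) (hmean : ∀ k, μ[Y k | F k] =ᵐ[μ] 0) :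
    Martingale (fun n ω => ∑ k ∈ Finset.range n, Y k ω) F μ :=
  martingale_of_condExp_sub_eq_zero_nat (stronglyAdapted_sum_range hmeas)
    (fun _ => integrable_finsetSum _ fun k _ => hint k)
    (fun n => by simpa only [← Finset.sum_apply, Finset.sum_range_succ_sub_sum] using hmean n)

lemma integral_sq_sum_range (hmeas : ∀ k, StronglyMeasurable[F (k + 1)] (Y k))
    (hL2 : ∀ k, MemLp (Y k) 2 μ) (hmean : ∀ k, μ[Y k | F k] =ᵐ[μ] 0) (n : ℕ) :
    ∫ ω, (∑ k ∈ Finset.range n, Y k ω) ^ 2 ∂μ = ∑ k ∈ Finset.range n, ∫ ω, Y k ω ^ 2 ∂μ := by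
  induction n with
  | zero => simp
  | succ n ih =>
    set S : Ω → ℝ := fun ω => ∑ k ∈ Finset.range n, Y k ω
    have hS : MemLp S 2 μ := by
      simpa only [S, ← Finset.sum_apply] using memLp_finsetSum' _ fun k _ => hL2 k
    have hSY : Integrable (S * Y n) μ := hS.integrable_mul (hL2 n)
    have hcrossInt : Integrable (fun ω => 2 * (S ω * Y n ω)) μ := hSY.const_mul 2
    have hrest : Integrable (fun ω => 2 * (S ω * Y n ω) + Y n ω ^ 2) μ :=
      hcrossInt.add (hL2 n).integrable_sq
    have hcross : ∫ ω, S ω * Y n ω ∂μ = 0 :=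
      integral_mul_eq_zero_of_condExp_eq_zero (F.le n) (stronglyAdapted_sum_range hmeas n) hSY
        ((hL2 n).integrable one_le_two) (hmean n)
    have hexpand : (fun ω => (∑ k ∈ Finset.range (n + 1), Y k ω) ^ 2) =
        fun ω => S ω ^ 2 + (2 * (S ω * Y n ω) + Y n ω ^ 2) := by
      ext ω
      simp only [S, Finset.sum_range_succ]
      ring
    rw [hexpand, integral_add hS.integrable_sq hrest,
      integral_add hcrossInt (hL2 n).integrable_sq, integral_const_mul, hcross, ih,
      Finset.sum_range_succ]
    ring

theorem ae_exists_tendsto_sum_range_of_summable_integral_sq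
    (hmeas : ∀ k, StronglyMeasurable[F (k + 1)] (Y k)) (hL2 : ∀ k, MemLp (Y k) 2 μ)
    (hmean : ∀ k, μ[Y k | F k] =ᵐ[μ] 0) (hsum : Summable fun k => ∫ ω, Y k ω ^ 2 ∂μ) :
    ∀ᵐ ω ∂μ, ∃ L, Tendsto (fun n => ∑ k ∈ Finset.range n, Y k ω) atTop (𝓝 L) := by
  refine (martingale_sum_range hmeas (fun k => (hL2 k).integrable one_le_two) hmean).submartingale
    |>.exists_ae_tendsto_of_bdd
      (R := (μ.real Set.univ + ∑' k, ∫ ω, Y k ω ^ 2 ∂μ).toNNReal) fun n => ?_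
  have hS : MemLp (fun ω => ∑ k ∈ Finset.range n, Y k ω) 2 μ := by
    simpa only [← Finset.sum_apply] using memLp_finsetSum' _ fun k _ => hL2 k
  refine (eLpNorm_one_le_of_memLp_two hS).trans (ENNReal.ofReal_le_ofReal ?_)
  rw [integral_sq_sum_range hmeas hL2 hmean n]
  gcongr
  exact hsum.sum_le_tsum _ fun k _ => integral_nonneg fun ω => sq_nonneg _

end SquareIntegrableMartingale

theorem ae_exists_tendsto_sum_range_mul_of_summable {Ω : Type*} {m0 : MeasurableSpace Ω}
    {μ : Measure Ω} [IsFiniteMeasure μ] {F : Filtration ℕ m0} {Z : ℕ → Ω → ℝ} {w : ℕ → ℝ}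
    (hmeas : ∀ k, StronglyMeasurable[F (k + 1)] (Z k)) (hL2 : ∀ k, MemLp (Z k) 2 μ)
    (hmean : ∀ k, μ[Z k | F k] =ᵐ[μ] 0)
    (hsum : Summable fun k => w k ^ 2 * ∫ ω, Z k ω ^ 2 ∂μ) :
    ∀ᵐ ω ∂μ, ∃ L, Tendsto (fun n => ∑ k ∈ Finset.range n, w k * Z k ω) atTop (𝓝 L) := by
  refine ae_exists_tendsto_sum_range_of_summable_integral_sq (fun k => (hmeas k).const_mul (w k))
    (fun k => (hL2 k).const_mul (w k)) (fun k => ?_) ?_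
  · change μ[w k • Z k | F k] =ᵐ[μ] 0
    filter_upwards [condExp_smul (w k) (Z k) (F k), hmean k] with ω hω hω'
    simpa [hω'] using hω
  · simpa only [mul_pow, integral_const_mul] using hsum

namespace NormOn

variable {D : ℕ} (nrm : NormOn D) {Ω : Type*} {m0 : MeasurableSpace Ω} {μ : Measure Ω}

lemma sq_stdPair_le {B : ℝ} {u : Fin D → ℝ} (hu : nrm u ≤ B) (y : Fin D → ℝ) :
    stdPair u y ^ 2 ≤ B ^ 2 * dualNorm nrm y ^ 2 := by
  have h := (nrm.abs_stdPair_le_mul_dualNorm u y).trans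
    (mul_le_mul_of_nonneg_right hu (nrm.dualNorm_nonneg y))
  rw [← mul_pow, ← sq_abs]
  exact pow_le_pow_left₀ (abs_nonneg _) h 2

lemma memLp_two_stdPair {B : ℝ} {V N : Ω → Fin D → ℝ} (hB : ∀ ω, nrm (V ω) ≤ B)
    (hmeas : AEStronglyMeasurable (fun ω => stdPair (V ω) (N ω)) μ)
    (hsq : Integrable (fun ω => dualNorm nrm (N ω) ^ 2) μ) :
    MemLp (fun ω => stdPair (V ω) (N ω)) 2 μ :=
  (memLp_two_iff_integrable_sq hmeas).mpr <| (hsq.const_mul (B ^ 2)).mono' (hmeas.pow 2)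
    (ae_of_all _ fun ω => by
      rw [Real.norm_of_nonneg (sq_nonneg _)]
      exact nrm.sq_stdPair_le (hB ω) _)

lemma integral_sq_stdPair_le {B : ℝ} {V N : Ω → Fin D → ℝ} (hB : ∀ ω, nrm (V ω) ≤ B)
    (hsq : Integrable (fun ω => dualNorm nrm (N ω) ^ 2) μ) :
    ∫ ω, stdPair (V ω) (N ω) ^ 2 ∂μ ≤ B ^ 2 * ∫ ω, dualNorm nrm (N ω) ^ 2 ∂μ := by
  rw [← integral_const_mul]
  exact integral_mono_of_nonneg (ae_of_all _ fun ω => sq_nonneg _) (hsq.const_mul _)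
    (ae_of_all _ fun ω => nrm.sq_stdPair_le (hB ω) _)

lemma integrable_of_integrable_dualNorm_sq [IsFiniteMeasure μ] {N : Ω → Fin D → ℝ}
    (hmeas : AEStronglyMeasurable N μ) (hsq : Integrable (fun ω => dualNorm nrm (N ω) ^ 2) μ) :
    Integrable N μ := by
  obtain ⟨K, hK, hle⟩ := nrm.exists_norm_le_mul_dualNorm
  refine (((integrable_const 1).add hsq).const_mul K).mono' hmeas (ae_of_all _ fun ω => ?_)
  have hd := nrm.dualNorm_nonneg (N ω)
  calc ‖N ω‖ ≤ K * dualNorm nrm (N ω) := hle _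
    _ ≤ K * (1 + dualNorm nrm (N ω) ^ 2) := by gcongr; nlinarith

end NormOn

lemma condExp_stdPair_eq_zero {D : ℕ} {Ω : Type*} {m m0 : MeasurableSpace Ω} {μ : Measure Ω}
    {V N : Ω → Fin D → ℝ} (hV : StronglyMeasurable[m] V)
    (hVN : Integrable (fun ω => stdPair (V ω) (N ω)) μ) (hN : Integrable N μ)
    (hmean : μ[N | m] =ᵐ[μ] 0) :
    μ[fun ω => stdPair (V ω) (N ω) | m] =ᵐ[μ] 0 := by
  filter_upwards [condExp_bilin_of_stronglyMeasurable_left (stdPairL D) hV hVN hN, hmean]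
    with ω hω hω'
  rw [hω', Pi.zero_apply, map_zero] at hω
  exact hω

theorem weighted_noise_sum_vanishes_general {D : ℕ} (nrm : NormOn D)
    {Ω : Type*} {m0 : MeasurableSpace Ω} (μ : Measure Ω) [IsProbabilityMeasure μ]
    (F : Filtration ℕ m0)
    (M : ℕ → Ω → (Fin D → ℝ))
    (hMmeas : ∀ n, StronglyMeasurable[F (n + 1)] (M (n + 1)))
    (hMsq : ∀ n, Integrable (fun ω => (dualNorm nrm (M (n + 1) ω)) ^ 2) μ)
    (hMmean : ∀ n, μ[M (n + 1) | F n] =ᵐ[μ] 0)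
    (C : Set (Fin D → ℝ)) (hCcomp : IsCompact C)
    (X : ℕ → Ω → (Fin D → ℝ))
    (hXad : ∀ n, StronglyMeasurable[F n] (X n))
    (hXmem : ∀ n ω, X n ω ∈ C)
    (x : Fin D → ℝ)
    (γ : ℕ → ℝ) (hγ : ∀ n, 0 < γ n)
    (hγdiv : Tendsto (fun n => ∑ k ∈ Finset.range n, γ k) atTop atTop)
    (hsum : Summable (fun k =>
      (γ k) ^ 2 * (∫ ω, (dualNorm nrm (M (k + 1) ω)) ^ 2 ∂μ) /
        (∑ i ∈ Finset.range (k + 1), γ i) ^ 2)) :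
    ∀ᵐ ω ∂μ, Tendsto
      (fun n => (∑ k ∈ Finset.range n, γ k * stdPair (X k ω - x) (M (k + 1) ω)) /
        (∑ k ∈ Finset.range n, γ k)) atTop (nhds 0) := by
  obtain ⟨B, hB⟩ := (hCcomp.image (nrm.continuous.comp (continuous_sub_right x))).bddAbove
  replace hB : ∀ k ω, nrm (X k ω - x) ≤ B := fun k ω => hB ⟨_, hXmem k ω, rfl⟩
  set Z : ℕ → Ω → ℝ := fun k ω => stdPair (X k ω - x) (M (k + 1) ω)
  have hXsub : ∀ k, StronglyMeasurable[F k] fun ω => X k ω - x :=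
    fun k => (hXad k).sub stronglyMeasurable_const
  have hZmeas : ∀ k, StronglyMeasurable[F (k + 1)] (Z k) := fun k =>
    (stdPairL D).continuous₂.comp_stronglyMeasurable
      (((hXsub k).mono (F.mono k.le_succ)).prodMk (hMmeas k))
  have hZL2 : ∀ k, MemLp (Z k) 2 μ := fun k =>
    nrm.memLp_two_stdPair (hB k) ((hZmeas k).mono (F.le _)).aestronglyMeasurable (hMsq k)
  have hZmean : ∀ k, μ[Z k | F k] =ᵐ[μ] 0 := fun k =>
    condExp_stdPair_eq_zero (hXsub k) ((hZL2 k).integrable one_le_two)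
      (nrm.integrable_of_integrable_dualNorm_sq ((hMmeas k).mono (F.le _)).aestronglyMeasurable
        (hMsq k)) (hMmean k)
  have hweights : Summable fun k =>
      (γ k / ∑ i ∈ Finset.range (k + 1), γ i) ^ 2 * ∫ ω, Z k ω ^ 2 ∂μ := by
    refine (hsum.mul_left (B ^ 2)).of_nonneg_of_le (fun k => by positivity) fun k => ?_
    calc _ ≤ (γ k / _) ^ 2 * (B ^ 2 * ∫ ω, dualNorm nrm (M (k + 1) ω) ^ 2 ∂μ) := by
          gcongr; exact nrm.integral_sq_stdPair_le (hB k) (hMsq k)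
      _ = _ := by ring
  filter_upwards [ae_exists_tendsto_sum_range_mul_of_summable hZmeas hZL2 hZmean hweights]
    with ω ⟨L, hL⟩
  exact Tendsto.kronecker hγ hγdiv (hL.congr fun n => Finset.sum_congr rfl fun k _ =>
    div_mul_eq_mul_div _ _ _)

/-- **Law-of-large-numbers behaviour of the weighted noise sums.**
Let `(F_n)` be a filtration, `(M_n)_{n≥1}` an `ℝ^D`-valued martingale difference sequence,
`(X_n)` adapted with values in a compact set `C ⊆ ℝ^D`, `x ∈ C`, and `γ_n > 0` with
`Σ γ_k = ∞` and `Σ_k γ_k² E‖M_{k+1}‖_*² / (Σ_{i≤k} γ_i)² < ∞`.  Then, almost surely,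
`S_n(x) / Σ_{k<n} γ_k → 0`, where `S_n(x) = Σ_{k<n} γ_k ⟨X_k − x, M_{k+1}⟩`. -/
theorem weighted_noise_sum_vanishes {D : ℕ} (nrm : NormOn D)
    {Ω : Type*} {m0 : MeasurableSpace Ω} (μ : Measure Ω) [IsProbabilityMeasure μ]
    (F : Filtration ℕ m0)
    (M : ℕ → Ω → (Fin D → ℝ))
    (hMmeas : ∀ n, StronglyMeasurable[F (n + 1)] (M (n + 1)))
    (hMsq : ∀ n, Integrable (fun ω => (dualNorm nrm (M (n + 1) ω)) ^ 2) μ)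
    (hMmean : ∀ n, μ[M (n + 1) | F n] =ᵐ[μ] 0)
    (C : Set (Fin D → ℝ)) (hCcomp : IsCompact C)
    (X : ℕ → Ω → (Fin D → ℝ))
    (hXad : ∀ n, StronglyMeasurable[F n] (X n))
    (hXmem : ∀ n ω, X n ω ∈ C)
    (x : Fin D → ℝ) (hx : x ∈ C)
    (γ : ℕ → ℝ) (hγ : ∀ n, 0 < γ n)
    (hγdiv : Tendsto (fun n => ∑ k ∈ Finset.range n, γ k) atTop atTop)
    (hsum : Summable (fun k =>
      (γ k) ^ 2 * (∫ ω, (dualNorm nrm (M (k + 1) ω)) ^ 2 ∂μ) /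
        (∑ i ∈ Finset.range (k + 1), γ i) ^ 2)) :
    ∀ᵐ ω ∂μ, Tendsto
      (fun n => (∑ k ∈ Finset.range n, γ k * stdPair (X k ω - x) (M (k + 1) ω)) /
        (∑ k ∈ Finset.range n, γ k)) atTop (nhds 0) :=
  weighted_noise_sum_vanishes_general nrm μ F M hMmeas hMsq hMmean C hCcomp X hXad hXmem x γ hγ
    hγdiv hsum
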